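/- arXiv:2106.03213 — 3 statements merged into one kernel-verified Lean document; each statement's English description precedes it below -/
import Mathlib

section
/- Let C ≥ 1 and D be natural numbers. Let p : Fin C → ℝ be a probability vector with p_s > 0 for all s, for each s ∈ Fin C let q_s : {0,…,D} → ℝ be a probability vector (the degree distribution for label s), and let z : Fin C → Fin C → ℝ be a row-stochastic matrix (z_{sr} ≥ 0 and Σ_r z_{sr} = 1 for each s). Let Ω = {n : Fin C → ℕ | Σ_k n_k ≤ D} be the space of neighborhood label configurations, and define the joint probability mass function on Fin C × Ω by P(s, n) = p_s · q_s(|n|) · (|n|! / Π_k n_k!) · Π_k z_{sk}^{n_k}, where |n| = Σ_k n_k. Then the mutual information of this joint distribution, MI = Σ_{s,n} P(s,n) · ln( P(s,n) / (p_s · m(n)) ) where m(n) = Σ_r P(r,n), satisfies MI ≥ −Σ_{s=1}^{C} p_s ln( Σ_{r=1}^{C} p_r ( Σ_{d=0}^{D} √(q_s(d) q_r(d)) · (Σ_{k=1}^{C} √(z_{sk} z_{rk}))^d ) ). The right-hand side is the Neighborhood Information Content (NIC). -/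
set_option maxHeartbeats 1000000

open scoped BigOperators


private lemma sqrt_prod' {α : Type*} (s : Finset α) (f : α → ℝ) (h : ∀ a ∈ s, 0 ≤ f a) :
    Real.sqrt (∏ a ∈ s, f a) = ∏ a ∈ s, Real.sqrt (f a) := by
  induction s using Finset.cons_induction with
  | empty => simp
  | cons a s ha ih =>
    rw [Finset.prod_cons, Finset.prod_cons, Real.sqrt_mul (h a (Finset.mem_cons_self a s)),
      ih fun b hb => h b (Finset.mem_cons_of_mem hb)]

private lemma sqrt_pow'' {a : ℝ} (ha : 0 ≤ a) (m : ℕ) :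
    Real.sqrt (a ^ m) = Real.sqrt a ^ m := by
  induction m with
  | zero => simp
  | succ k ih => rw [pow_succ, pow_succ, Real.sqrt_mul (pow_nonneg ha k), ih]

private lemma gibbs {α : Type*} (s : Finset α) (f g : α → ℝ)
    (hf : ∀ x ∈ s, 0 ≤ f x) (hg : ∀ x ∈ s, 0 ≤ g x)
    (hfg : ∀ x ∈ s, 0 < f x → 0 < g x)
    (hsum : ∑ x ∈ s, g x ≤ ∑ x ∈ s, f x) :
    0 ≤ ∑ x ∈ s, f x * Real.log (f x / g x) := by
  have key : ∀ x ∈ s, f x - g x ≤ f x * Real.log (f x / g x) := by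
    intro x hx
    rcases eq_or_lt_of_le (hf x hx) with h0 | h0
    · rw [← h0]; simp; linarith [hg x hx]
    · have hgx := hfg x hx h0
      have h1 : Real.log (g x / f x) ≤ g x / f x - 1 :=
        Real.log_le_sub_one_of_pos (div_pos hgx h0)
      have h2 : Real.log (f x / g x) = - Real.log (g x / f x) := by
        rw [← Real.log_inv, inv_div]
      rw [h2]
      have h3 : 1 - g x / f x ≤ -Real.log (g x / f x) := by linarith
      calc f x - g x = f x * (1 - g x / f x) := by field_simp
        _ ≤ f x * (-Real.log (g x / f x)) := mul_le_mul_of_nonneg_left h3 h0.le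
  have h4 := Finset.sum_le_sum key
  rw [Finset.sum_sub_distrib] at h4
  linarith

private lemma mi_core {ι β : Type*} [Fintype ι] (Ω : Finset β)
    (w : ι → ℝ) (hw : ∀ i, 0 < w i) (hw1 : ∑ i, w i = 1)
    (Q : ι → β → ℝ) (hQ0 : ∀ i n, 0 ≤ Q i n)
    (hQ1 : ∀ i, ∑ n ∈ Ω, Q i n = 1) :
    ∑ i, ∑ n ∈ Ω, (w i * Q i n) * Real.log ((w i * Q i n) / (w i * ∑ j, w j * Q j n))
      ≥ -∑ i, w i * Real.log (∑ j, w j * ∑ n ∈ Ω, Real.sqrt (Q i n * Q j n)) := by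
  classical
  set m : β → ℝ := fun n => ∑ j, w j * Q j n with hm_def
  set g : β → ℝ := fun n => ∑ j, w j * Real.sqrt (Q j n) with hg_def
  set A : ι → ℝ := fun i => ∑ n ∈ Ω, Real.sqrt (Q i n) * g n with hA_def
  have hm0 : ∀ n, 0 ≤ m n := fun n =>
    Finset.sum_nonneg fun j _ => mul_nonneg (hw j).le (hQ0 j n)
  have hg0 : ∀ n, 0 ≤ g n := fun n =>
    Finset.sum_nonneg fun j _ => mul_nonneg (hw j).le (Real.sqrt_nonneg _)
  have hwm : ∀ i n, w i * Q i n ≤ m n := fun i n =>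
    Finset.single_le_sum (f := fun j => w j * Q j n)
      (fun j _ => mul_nonneg (hw j).le (hQ0 j n)) (Finset.mem_univ i)
  have hwg : ∀ i n, w i * Real.sqrt (Q i n) ≤ g n := fun i n =>
    Finset.single_le_sum (f := fun j => w j * Real.sqrt (Q j n))
      (fun j _ => mul_nonneg (hw j).le (Real.sqrt_nonneg _)) (Finset.mem_univ i)
  have hApos : ∀ i, 0 < A i := by
    intro i
    have h1 : w i = ∑ n ∈ Ω, Real.sqrt (Q i n) * (w i * Real.sqrt (Q i n)) := by
      calc w i = w i * ∑ n ∈ Ω, Q i n := by rw [hQ1 i, mul_one]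
        _ = ∑ n ∈ Ω, Real.sqrt (Q i n) * (w i * Real.sqrt (Q i n)) := by
            rw [Finset.mul_sum]
            refine Finset.sum_congr rfl fun n _ => ?_
            have hss := Real.mul_self_sqrt (hQ0 i n)
            linear_combination (w i) * hss.symm
    have h2 : w i ≤ A i := by
      rw [h1]
      exact Finset.sum_le_sum fun n _ =>
        mul_le_mul_of_nonneg_left (hwg i n) (Real.sqrt_nonneg _)
    exact lt_of_lt_of_le (hw i) h2
  have hA_eq : ∀ i, ∑ j, w j * ∑ n ∈ Ω, Real.sqrt (Q i n * Q j n) = A i := by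
    intro i
    simp only [hA_def, hg_def, Finset.mul_sum]
    rw [Finset.sum_comm]
    exact Finset.sum_congr rfl fun n _ => Finset.sum_congr rfl fun j _ => by
      rw [Real.sqrt_mul (hQ0 i n)]; ring
  have hmtot : ∑ n ∈ Ω, m n = 1 := by
    calc ∑ n ∈ Ω, m n = ∑ n ∈ Ω, ∑ j, w j * Q j n := rfl
      _ = ∑ j, ∑ n ∈ Ω, w j * Q j n := Finset.sum_comm
      _ = ∑ j, w j := Finset.sum_congr rfl fun j _ => by
          rw [← Finset.mul_sum, hQ1 j, mul_one]
      _ = 1 := hw1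
  have hsumPi : ∑ x ∈ Finset.univ ×ˢ Ω, w x.1 * Q x.1 x.2 = 1 := by
    rw [Finset.sum_product]
    calc ∑ i, ∑ n ∈ Ω, w i * Q i n = ∑ i, w i :=
        Finset.sum_congr rfl fun i _ => by rw [← Finset.mul_sum, hQ1 i, mul_one]
      _ = 1 := hw1
  -- Gibbs 1
  have hG1 : 0 ≤ ∑ x ∈ Finset.univ ×ˢ Ω, (w x.1 * Q x.1 x.2) *
      Real.log ((w x.1 * Q x.1 x.2) / (w x.1 * Real.sqrt (Q x.1 x.2) * (g x.2 / A x.1))) := by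
    apply gibbs
    · exact fun x _ => mul_nonneg (hw x.1).le (hQ0 x.1 x.2)
    · exact fun x _ => mul_nonneg (mul_nonneg (hw x.1).le (Real.sqrt_nonneg _))
        (div_nonneg (hg0 _) (hApos _).le)
    · intro x _ hpos
      have hq : 0 < Q x.1 x.2 := by
        by_contra h; push_neg at h; nlinarith [hw x.1]
      have hs : 0 < Real.sqrt (Q x.1 x.2) := Real.sqrt_pos.2 hq
      have hgpos : 0 < g x.2 := lt_of_lt_of_le (mul_pos (hw x.1) hs) (hwg x.1 x.2)
      exact mul_pos (mul_pos (hw x.1) hs) (div_pos hgpos (hApos x.1))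
    · rw [hsumPi, Finset.sum_product]
      have hσi : ∀ i, ∑ n ∈ Ω, w i * Real.sqrt (Q i n) * (g n / A i) = w i := by
        intro i
        have : ∑ n ∈ Ω, w i * Real.sqrt (Q i n) * (g n / A i)
            = (w i / A i) * ∑ n ∈ Ω, Real.sqrt (Q i n) * g n := by
          rw [Finset.mul_sum]
          exact Finset.sum_congr rfl fun n _ => by ring
        rw [this, show (∑ n ∈ Ω, Real.sqrt (Q i n) * g n) = A i from rfl,
          div_mul_eq_mul_div, mul_div_assoc, div_self (hApos i).ne', mul_one]
      refine le_of_eq ?_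
      calc ∑ i, ∑ n ∈ Ω, w i * Real.sqrt (Q i n) * (g n / A i) = ∑ i, w i :=
          Finset.sum_congr rfl fun i _ => hσi i
        _ = 1 := hw1
  -- Gibbs 2
  have hG2 : 0 ≤ ∑ x ∈ Finset.univ ×ˢ Ω, (w x.1 * Q x.1 x.2) *
      Real.log ((w x.1 * Q x.1 x.2) / (w x.1 * Real.sqrt (Q x.1 x.2) * (m x.2 / g x.2))) := by
    apply gibbs
    · exact fun x _ => mul_nonneg (hw x.1).le (hQ0 x.1 x.2)
    · exact fun x _ => mul_nonneg (mul_nonneg (hw x.1).le (Real.sqrt_nonneg _))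
        (div_nonneg (hm0 _) (hg0 _))
    · intro x _ hpos
      have hq : 0 < Q x.1 x.2 := by
        by_contra h; push_neg at h; nlinarith [hw x.1]
      have hs : 0 < Real.sqrt (Q x.1 x.2) := Real.sqrt_pos.2 hq
      have hgpos : 0 < g x.2 := lt_of_lt_of_le (mul_pos (hw x.1) hs) (hwg x.1 x.2)
      have hmpos : 0 < m x.2 := lt_of_lt_of_le (mul_pos (hw x.1) hq) (hwm x.1 x.2)
      exact mul_pos (mul_pos (hw x.1) hs) (div_pos hmpos hgpos)
    · rw [hsumPi, Finset.sum_product, Finset.sum_comm]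
      have hτn : ∀ n ∈ Ω, ∑ i, w i * Real.sqrt (Q i n) * (m n / g n) ≤ m n := by
        intro n _
        have h5 : ∑ i, w i * Real.sqrt (Q i n) * (m n / g n) = g n * (m n / g n) := by
          rw [hg_def, Finset.sum_mul]
        rw [h5]
        rcases eq_or_ne (g n) 0 with h | h
        · rw [h, zero_mul]; exact hm0 n
        · rw [mul_comm, div_mul_cancel₀ _ h]
      calc ∑ n ∈ Ω, ∑ i, w i * Real.sqrt (Q i n) * (m n / g n) ≤ ∑ n ∈ Ω, m n :=
          Finset.sum_le_sum hτn
        _ = 1 := hmtot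
  -- rewrite the goal
  have hrw : ∀ i, Real.log (∑ j, w j * ∑ n ∈ Ω, Real.sqrt (Q i n * Q j n))
      = Real.log (A i) := fun i => by rw [hA_eq i]
  have hmn : ∀ n, (∑ j, w j * Q j n) = m n := fun n => rfl
  simp only [hrw, hmn]
  -- main splitting identity
  have split : (∑ i, ∑ n ∈ Ω, (w i * Q i n) * Real.log ((w i * Q i n) / (w i * m n)))
      + ∑ i, w i * Real.log (A i)
      = (∑ x ∈ Finset.univ ×ˢ Ω, (w x.1 * Q x.1 x.2) *
          Real.log ((w x.1 * Q x.1 x.2) / (w x.1 * Real.sqrt (Q x.1 x.2) * (g x.2 / A x.1))))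
      + (∑ x ∈ Finset.univ ×ˢ Ω, (w x.1 * Q x.1 x.2) *
          Real.log ((w x.1 * Q x.1 x.2) / (w x.1 * Real.sqrt (Q x.1 x.2) * (m x.2 / g x.2)))) := by
    rw [Finset.sum_product, Finset.sum_product]
    have hlogA : ∀ i, w i * Real.log (A i) = ∑ n ∈ Ω, (w i * Q i n) * Real.log (A i) := by
      intro i
      calc w i * Real.log (A i) = (∑ n ∈ Ω, w i * Q i n) * Real.log (A i) := by
            rw [← Finset.mul_sum, hQ1 i, mul_one]
        _ = ∑ n ∈ Ω, (w i * Q i n) * Real.log (A i) := Finset.sum_mul _ _ _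
    simp only [hlogA]
    rw [← Finset.sum_add_distrib, ← Finset.sum_add_distrib]
    refine Finset.sum_congr rfl fun i _ => ?_
    rw [← Finset.sum_add_distrib, ← Finset.sum_add_distrib]
    refine Finset.sum_congr rfl fun n hn => ?_
    rcases eq_or_lt_of_le (hQ0 i n) with h0 | h0
    · rw [← h0]; simp
    · have hwi := hw i
      have hmpos : 0 < m n := lt_of_lt_of_le (mul_pos hwi h0) (hwm i n)
      have hs : 0 < Real.sqrt (Q i n) := Real.sqrt_pos.2 h0
      have hgpos : 0 < g n := lt_of_lt_of_le (mul_pos hwi hs) (hwg i n)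
      have hA' := hApos i
      have e1 : (0:ℝ) < (w i * Q i n) / (w i * m n) := by positivity
      have e3 : (0:ℝ) < (w i * Q i n) / (w i * Real.sqrt (Q i n) * (g n / A i)) := by positivity
      have e4 : (0:ℝ) < (w i * Q i n) / (w i * Real.sqrt (Q i n) * (m n / g n)) := by positivity
      rw [← mul_add, ← mul_add, ← Real.log_mul e1.ne' hA'.ne', ← Real.log_mul e3.ne' e4.ne']
      congr 2
      set t := Real.sqrt (Q i n) with ht
      rw [show Q i n = t * t by rw [ht]; exact (Real.mul_self_sqrt (hQ0 i n)).symm]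
      have htpos : (0:ℝ) < t := hs
      field_simp
  linarith [hG1, hG2, split]

/-- **Theorem 1 (probabilistic core).** Lower bound on the mutual information between a node's
label and the label configuration of its neighborhood, in terms of the Neighborhood Information
Content (NIC). -/
theorem nic_lower_bound
    (C D : ℕ) (hC : 1 ≤ C)
    (p : Fin C → ℝ) (hp_pos : ∀ s, 0 < p s) (hp_sum : ∑ s, p s = 1)
    (q : Fin C → ℕ → ℝ) (hq_nonneg : ∀ s d, 0 ≤ q s d)
    (hq_sum : ∀ s, ∑ d ∈ Finset.range (D + 1), q s d = 1)
    (z : Fin C → Fin C → ℝ) (hz_nonneg : ∀ s r, 0 ≤ z s r)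
    (hz_sum : ∀ s, ∑ r, z s r = 1)
    -- the space of neighborhood label configurations of size at most `D`
    (Ω : Finset (Fin C → ℕ))
    (hΩ : Ω = (Fintype.piFinset fun _ : Fin C => Finset.range (D + 1)).filter
        (fun n => ∑ k, n k ≤ D))
    -- the joint probability mass function on `Fin C × Ω`
    (P : Fin C → (Fin C → ℕ) → ℝ)
    (hP : ∀ s n, P s n =
      p s * q s (∑ k, n k) * (Nat.multinomial Finset.univ n : ℝ) * ∏ k, z s k ^ n k)
    -- the marginal over configurations
    (m : (Fin C → ℕ) → ℝ) (hm : ∀ n, m n = ∑ r, P r n)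
    -- the mutual information of the joint distribution
    (MI : ℝ)
    (hMI : MI = ∑ s, ∑ n ∈ Ω, P s n * Real.log (P s n / (p s * m n))) :
    MI ≥ -∑ s, p s * Real.log (∑ r, p r *
      (∑ d ∈ Finset.range (D + 1), Real.sqrt (q s d * q r d) *
        (∑ k, Real.sqrt (z s k * z r k)) ^ d)) := by
  classical
  have : NeZero C := ⟨by omega⟩
  set Q : Fin C → (Fin C → ℕ) → ℝ := fun s n =>
    q s (∑ k, n k) * (Nat.multinomial Finset.univ n : ℝ) * ∏ k, z s k ^ n k with hQ_def
  have hPQ : ∀ s n, P s n = p s * Q s n := by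
    intro s n; rw [hP, hQ_def]; ring
  have hQ0 : ∀ s n, 0 ≤ Q s n := by
    intro s n
    exact mul_nonneg (mul_nonneg (hq_nonneg s _) (Nat.cast_nonneg _))
      (Finset.prod_nonneg fun k _ => pow_nonneg (hz_nonneg s k) _)
  -- decomposition of Ω
  have hΩeq : Ω = (Finset.range (D + 1)).biUnion fun d => Finset.piAntidiag Finset.univ d := by
    rw [hΩ]; ext n
    simp only [Finset.mem_filter, Fintype.mem_piFinset, Finset.mem_range, Finset.mem_biUnion,
      Finset.mem_piAntidiag, Nat.lt_succ_iff]
    constructor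
    · rintro ⟨-, hsum⟩
      exact ⟨∑ k, n k, hsum, rfl, fun i _ => Finset.mem_univ i⟩
    · rintro ⟨d, hd, hsum, -⟩
      have hsum' : (∑ k : Fin C, n k) = d := hsum
      have hk : ∀ k : Fin C, n k ≤ D := by
        intro k
        have h1 : n k ≤ ∑ k : Fin C, n k :=
          Finset.single_le_sum (f := n) (fun i _ => Nat.zero_le _) (Finset.mem_univ k)
        omega
      exact ⟨hk, by omega⟩
  have hdisj : (↑(Finset.range (D + 1)) : Set ℕ).PairwiseDisjoint
      (fun d => Finset.piAntidiag (Finset.univ : Finset (Fin C)) d) := by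
    intro a _ b _ hab
    refine Finset.disjoint_left.2 fun n hna hnb => hab ?_
    have h1 := (Finset.mem_piAntidiag.1 hna).1
    have h2 := (Finset.mem_piAntidiag.1 hnb).1
    omega
  have hΩsum : ∀ F : (Fin C → ℕ) → ℝ, ∑ n ∈ Ω, F n
      = ∑ d ∈ Finset.range (D + 1), ∑ n ∈ Finset.piAntidiag Finset.univ d, F n := by
    intro F; rw [hΩeq, Finset.sum_biUnion hdisj]
  -- multinomial theorem
  have hmt : ∀ (x : Fin C → ℝ) (d : ℕ),
      ∑ n ∈ Finset.piAntidiag Finset.univ d,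
        (Nat.multinomial Finset.univ n : ℝ) * ∏ k, x k ^ n k = (∑ k, x k) ^ d :=
    fun x d => (Finset.sum_pow_eq_sum_piAntidiag Finset.univ x d).symm
  -- normalization of Q
  have hQ1 : ∀ s, ∑ n ∈ Ω, Q s n = 1 := by
    intro s
    rw [hΩsum]
    have hstep : ∀ d ∈ Finset.range (D + 1),
        ∑ n ∈ Finset.piAntidiag Finset.univ d, Q s n = q s d := by
      intro d _
      calc ∑ n ∈ Finset.piAntidiag Finset.univ d, Q s n
          = ∑ n ∈ Finset.piAntidiag Finset.univ d,
              q s d * ((Nat.multinomial Finset.univ n : ℝ) * ∏ k, z s k ^ n k) := by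
            refine Finset.sum_congr rfl fun n hn => ?_
            simp only [hQ_def]
            rw [show (∑ k, n k) = d from (Finset.mem_piAntidiag.1 hn).1]
            ring
        _ = q s d * (∑ k, z s k) ^ d := by rw [← Finset.mul_sum, hmt]
        _ = q s d := by rw [hz_sum s, one_pow, mul_one]
    rw [Finset.sum_congr rfl hstep, hq_sum]
  -- Bhattacharyya identity
  have hBC : ∀ s r, ∑ n ∈ Ω, Real.sqrt (Q s n * Q r n)
      = ∑ d ∈ Finset.range (D + 1), Real.sqrt (q s d * q r d) *
          (∑ k, Real.sqrt (z s k * z r k)) ^ d := by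
    intro s r
    rw [hΩsum]
    refine Finset.sum_congr rfl fun d _ => ?_
    calc ∑ n ∈ Finset.piAntidiag Finset.univ d, Real.sqrt (Q s n * Q r n)
        = ∑ n ∈ Finset.piAntidiag Finset.univ d, Real.sqrt (q s d * q r d) *
            ((Nat.multinomial Finset.univ n : ℝ) * ∏ k, Real.sqrt (z s k * z r k) ^ n k) := by
          refine Finset.sum_congr rfl fun n hn => ?_
          have hd := (Finset.mem_piAntidiag.1 hn).1
          have hprod : (∏ k, z s k ^ n k) * (∏ k, z r k ^ n k)
              = ∏ k, (z s k * z r k) ^ n k := by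
            rw [← Finset.prod_mul_distrib]
            exact Finset.prod_congr rfl fun k _ => (mul_pow _ _ _).symm
          have hQQ : Q s n * Q r n = (q s d * q r d) *
              (((Nat.multinomial Finset.univ n : ℝ)) ^ 2 * ∏ k, (z s k * z r k) ^ n k) := by
            simp only [hQ_def]
            rw [show (∑ k, n k) = d from hd, ← hprod]; ring
          rw [hQQ, Real.sqrt_mul (mul_nonneg (hq_nonneg s d) (hq_nonneg r d)),
            Real.sqrt_mul (sq_nonneg _), Real.sqrt_sq (Nat.cast_nonneg _),
            sqrt_prod' _ _ (fun k _ => pow_nonneg (mul_nonneg (hz_nonneg s k) (hz_nonneg r k)) _)]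
          congr 2
          exact Finset.prod_congr rfl fun k _ =>
            sqrt_pow'' (mul_nonneg (hz_nonneg s k) (hz_nonneg r k)) _
      _ = Real.sqrt (q s d * q r d) * (∑ k, Real.sqrt (z s k * z r k)) ^ d := by
          rw [← Finset.mul_sum, hmt]
  -- apply the core lemma
  have hcore := mi_core Ω p hp_pos hp_sum Q hQ0 hQ1
  have hMIeq : MI = ∑ s, ∑ n ∈ Ω, (p s * Q s n) *
      Real.log ((p s * Q s n) / (p s * ∑ j, p j * Q j n)) := by
    rw [hMI]
    refine Finset.sum_congr rfl fun s _ => Finset.sum_congr rfl fun n _ => ?_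
    rw [hPQ, hm]
    have hmr : (∑ r, P r n) = ∑ j, p j * Q j n := Finset.sum_congr rfl fun r _ => hPQ r n
    rw [hmr]
  have hRHS : ∀ s, (∑ r, p r * (∑ d ∈ Finset.range (D + 1), Real.sqrt (q s d * q r d) *
        (∑ k, Real.sqrt (z s k * z r k)) ^ d))
      = ∑ j, p j * ∑ n ∈ Ω, Real.sqrt (Q s n * Q j n) := by
    intro s
    exact Finset.sum_congr rfl fun r _ => by rw [hBC s r]
  rw [hMIeq]
  simp only [hRHS]
  exact hcore
end

section
/- Let X be a nonempty finite type and let L = Fin C with C ≥ 1. Let p : Fin C → ℝ be a probability vector with p_s > 0 for all s, and for each s let z_s : X → ℝ be a probability mass function on X. Define the mixture m(x) = Σ_{s=1}^{C} p_s z_s(x). Then the Shannon entropy of the mixture satisfies H(m) ≥ Σ_{s=1}^{C} p_s H(z_s) − Σ_{s=1}^{C} p_s ln( Σ_{r=1}^{C} p_r BC(z_s, z_r) ), where BC(z_s, z_r) = Σ_{x ∈ X} √(z_s(x) z_r(x)) is the Bhattacharyya coefficient. -/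
/-!
Writing `m = ∑ s, p s • z s`, the entropy of the mixture splits as
`H(m) = ∑ s, p s * H(z s) + ∑ s, p s * KL(z s ‖ m)`. Jensen's inequality for `log` bounds each
divergence by the Bhattacharyya coefficient, `KL(z s ‖ m) ≥ -2 log BC(z s, m)`, and Cauchy–Schwarz
with the weight `g = ∑ r, p r * √(z r)` gives `BC(z s, m)² ≤ c s * d s`, where
`c s = ∑ x, √(z s x) * g x = ∑ r, p r * BC(z s, z r)` and `d s = ∑ x, √(z s x) * m x / g x`.
Since `∑ s, p s * d s = ∑ x, m x = 1`, Jensen once more gives `∑ s, p s * log (d s) ≤ 0`.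
-/

open Real Finset

section

variable {ι X : Type*} [Fintype ι]

theorem sum_mul_log_div_le_log_sum {w u : ι → ℝ} (hw : ∀ i, 0 ≤ w i) (hw1 : ∑ i, w i = 1)
    (hu : ∀ i, 0 ≤ u i) (hwu : ∀ i, w i ≠ 0 → 0 < u i) :
    ∑ i, w i * log (u i / w i) ≤ log (∑ i, u i) := by
  set S := ∑ i, u i
  obtain ⟨j, hj⟩ : ∃ j, w j ≠ 0 := by
    by_contra! h
    simp [h] at hw1
  have hS : 0 < S := (hwu j hj).trans_le (single_le_sum (fun i _ => hu i) (mem_univ j))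
  have hterm : ∀ i, w i * log (u i / w i) ≤ w i * log S + (u i / S - w i) := by
    intro i
    rcases (hw i).eq_or_lt with hwi | hwi
    · rw [← hwi]
      simpa using div_nonneg (hu i) hS.le
    · have hui := hwu i hwi.ne'
      have hlog := log_le_sub_one_of_pos (div_pos hui (mul_pos hwi hS))
      rw [log_div hui.ne' (mul_pos hwi hS).ne', log_mul hwi.ne' hS.ne'] at hlog
      rw [log_div hui.ne' hwi.ne']
      have hdiv : w i * (u i / (w i * S) - 1) = u i / S - w i := by field_simp
      linarith [mul_le_mul_of_nonneg_left hlog hwi.le]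
  calc ∑ i, w i * log (u i / w i) ≤ ∑ i, (w i * log S + (u i / S - w i)) :=
        sum_le_sum fun i _ => hterm i
    _ = log S := by
        rw [sum_add_distrib, sum_sub_distrib, ← sum_mul, ← sum_div, hw1, div_self hS.ne']
        ring

def mixture (p : ι → ℝ) (z : ι → X → ℝ) (x : X) : ℝ := ∑ i, p i * z i x

noncomputable def sqrtMixture (p : ι → ℝ) (z : ι → X → ℝ) (x : X) : ℝ := ∑ i, p i * √(z i x)

section Mixture

variable {p : ι → ℝ} {z : ι → X → ℝ}

theorem mul_le_mixture (hp : ∀ i, 0 ≤ p i) (hz : ∀ i x, 0 ≤ z i x) (i : ι) (x : X) :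
    p i * z i x ≤ mixture p z x :=
  single_le_sum (f := fun i => p i * z i x) (fun j _ => mul_nonneg (hp j) (hz j x)) (mem_univ i)

theorem mixture_nonneg (hp : ∀ i, 0 ≤ p i) (hz : ∀ i x, 0 ≤ z i x) (x : X) :
    0 ≤ mixture p z x :=
  sum_nonneg fun i _ => mul_nonneg (hp i) (hz i x)

theorem mixture_pos (hp : ∀ i, 0 < p i) (hz : ∀ i x, 0 ≤ z i x) {i : ι} {x : X}
    (hzx : z i x ≠ 0) : 0 < mixture p z x :=
  (mul_pos (hp i) ((hz i x).lt_of_ne' hzx)).trans_le (mul_le_mixture (fun j => (hp j).le) hz i x)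

theorem mixture_eq_zero_of_sqrtMixture_eq_zero (hp : ∀ i, 0 < p i) (hz : ∀ i x, 0 ≤ z i x)
    {x : X} (hx : sqrtMixture p z x = 0) : mixture p z x = 0 := by
  have hzero := (sum_eq_zero_iff_of_nonneg fun i _ => mul_nonneg (hp i).le (sqrt_nonneg _)).1 hx
  refine sum_eq_zero fun i hi => ?_
  have : √(z i x) = 0 := (mul_eq_zero.1 (hzero i hi)).resolve_left (hp i).ne'
  rw [(sqrt_eq_zero (hz i x)).1 this, mul_zero]

end Mixture

variable [Fintype X]

noncomputable def bhattacharyya (a b : X → ℝ) : ℝ := ∑ x, √(a x * b x)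

theorem bhattacharyya_nonneg (a b : X → ℝ) : 0 ≤ bhattacharyya a b :=
  sum_nonneg fun _ _ => sqrt_nonneg _

theorem bhattacharyya_self {a : X → ℝ} (ha : ∀ x, 0 ≤ a x) : bhattacharyya a a = ∑ x, a x :=
  sum_congr rfl fun x _ => sqrt_mul_self (ha x)

theorem sum_mul_log_div_le_two_mul_log_bhattacharyya {a b : X → ℝ} (ha : ∀ x, 0 ≤ a x)
    (ha1 : ∑ x, a x = 1) (hb : ∀ x, 0 ≤ b x) (hab : ∀ x, a x ≠ 0 → 0 < b x) :
    ∑ x, a x * log (b x / a x) ≤ 2 * log (bhattacharyya a b) := by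
  have hhalf : ∀ x, a x * log (b x / a x) = 2 * (a x * log (√(a x * b x) / a x)) := by
    intro x
    rcases (ha x).eq_or_lt with hax | hax
    · simp [← hax]
    · have hsqrt : √(a x * b x) / a x = √(b x / a x) := by
        rw [sqrt_div' _ hax.le, sqrt_mul hax.le, eq_div_iff (sqrt_pos.2 hax).ne']
        field_simp
        rw [sq_sqrt hax.le]
        ring
      rw [hsqrt, log_sqrt (div_nonneg (hb x) hax.le)]
      ring
  rw [sum_congr rfl fun x _ => hhalf x, ← mul_sum]
  gcongr
  exact sum_mul_log_div_le_log_sum ha ha1 (fun x => sqrt_nonneg _)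
    fun x hx => sqrt_pos.2 (mul_pos ((ha x).lt_of_ne' hx) (hab x hx))

theorem bhattacharyya_sq_le {a b g : X → ℝ} (ha : ∀ x, 0 ≤ a x) (hb : ∀ x, 0 ≤ b x)
    (hg : ∀ x, 0 ≤ g x) (hgb : ∀ x, g x = 0 → b x = 0) :
    bhattacharyya a b ^ 2 ≤ (∑ x, √(a x) * g x) * ∑ x, √(a x) * b x / g x := by
  refine sum_sq_le_sum_mul_sum_of_sq_le_mul _ (fun x _ => mul_nonneg (sqrt_nonneg _) (hg x))
    (fun x _ => div_nonneg (mul_nonneg (sqrt_nonneg _) (hb x)) (hg x)) fun x _ => le_of_eq ?_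
  rw [sq_sqrt (mul_nonneg (ha x) (hb x))]
  rcases eq_or_ne (g x) 0 with hgx | hgx
  · simp [hgb x hgx]
  · field_simp
    rw [sq_sqrt (ha x)]
    ring

section Mixture

variable {p : ι → ℝ} {z : ι → X → ℝ}

theorem sum_mixture (hp1 : ∑ i, p i = 1) (hz1 : ∀ i, ∑ x, z i x = 1) :
    ∑ x, mixture p z x = 1 := by
  simp only [mixture]
  rw [sum_comm]
  simp [← mul_sum, hz1, hp1]

theorem sum_negMulLog_mixture (hp : ∀ i, 0 < p i) (hz : ∀ i x, 0 ≤ z i x) :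
    ∑ x, negMulLog (mixture p z x) = ∑ i, p i * ∑ x, negMulLog (z i x)
      - ∑ i, p i * ∑ x, z i x * log (mixture p z x / z i x) := by
  have hsplit : ∀ i x, -(z i x * log (mixture p z x))
      = negMulLog (z i x) - z i x * log (mixture p z x / z i x) := by
    intro i x
    rcases eq_or_ne (z i x) 0 with hzx | hzx
    · simp [hzx]
    · rw [negMulLog, log_div (mixture_pos hp hz hzx).ne' hzx]
      ring
  have hpoint : ∀ x, negMulLog (mixture p z x) = ∑ i, p i * -(z i x * log (mixture p z x)) := by
    intro x
    simp only [mul_neg, sum_neg_distrib, ← mul_assoc, ← sum_mul, negMulLog, neg_mul]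
    rfl
  calc ∑ x, negMulLog (mixture p z x)
      = ∑ x, ∑ i, p i * (negMulLog (z i x) - z i x * log (mixture p z x / z i x)) := by
        simp only [hpoint, hsplit]
    _ = _ := by
        rw [sum_comm]
        simp only [← mul_sum, sum_sub_distrib, mul_sub]

theorem sum_sqrt_mul_sqrtMixture (hz : ∀ i x, 0 ≤ z i x) (i : ι) :
    ∑ x, √(z i x) * sqrtMixture p z x = ∑ r, p r * bhattacharyya (z i) (z r) := by
  simp only [sqrtMixture, bhattacharyya, mul_sum]
  rw [sum_comm]
  exact sum_congr rfl fun r _ => sum_congr rfl fun x _ => by rw [sqrt_mul (hz i x)]; ring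

theorem sum_mul_sum_sqrt_mul_mixture_div_sqrtMixture (hp : ∀ i, 0 < p i)
    (hz : ∀ i x, 0 ≤ z i x) (hp1 : ∑ i, p i = 1) (hz1 : ∀ i, ∑ x, z i x = 1) :
    ∑ i, p i * ∑ x, √(z i x) * mixture p z x / sqrtMixture p z x = 1 := by
  simp only [mul_sum]
  rw [sum_comm, ← sum_mixture hp1 hz1]
  refine sum_congr rfl fun x _ => ?_
  calc ∑ i, p i * (√(z i x) * mixture p z x / sqrtMixture p z x)
      = sqrtMixture p z x * (mixture p z x / sqrtMixture p z x) := by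
        simp only [sqrtMixture, sum_mul]
        exact sum_congr rfl fun i _ => by ring
    _ = mixture p z x := mul_div_cancel_of_imp' (mixture_eq_zero_of_sqrtMixture_eq_zero hp hz)

theorem bhattacharyya_mixture_pos (hp : ∀ i, 0 < p i) (hz : ∀ i x, 0 ≤ z i x)
    (hz1 : ∀ i, ∑ x, z i x = 1) (i : ι) : 0 < bhattacharyya (z i) (mixture p z) := by
  calc 0 < √(p i) := sqrt_pos.2 (hp i)
    _ = ∑ x, √(p i) * z i x := by rw [← mul_sum, hz1, mul_one]
    _ = ∑ x, √(z i x * (p i * z i x)) := sum_congr rfl fun x _ => by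
        rw [mul_left_comm, sqrt_mul (hp i).le, sqrt_mul_self (hz i x)]
    _ ≤ bhattacharyya (z i) (mixture p z) :=
        sum_le_sum fun x _ => sqrt_le_sqrt (mul_le_mul_of_nonneg_left
          (mul_le_mixture (fun j => (hp j).le) hz i x) (hz i x))

theorem bhattacharyya_mixture_sq_le (hp : ∀ i, 0 < p i) (hz : ∀ i x, 0 ≤ z i x) (i : ι) :
    bhattacharyya (z i) (mixture p z) ^ 2 ≤ (∑ r, p r * bhattacharyya (z i) (z r)) *
      ∑ x, √(z i x) * mixture p z x / sqrtMixture p z x := by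
  rw [← sum_sqrt_mul_sqrtMixture hz]
  exact bhattacharyya_sq_le (hz i) (mixture_nonneg (fun j => (hp j).le) hz)
    (fun x => sum_nonneg fun j _ => mul_nonneg (hp j).le (sqrt_nonneg _))
    fun x => mixture_eq_zero_of_sqrtMixture_eq_zero hp hz

theorem sum_sqrt_mul_mixture_div_sqrtMixture_pos (hp : ∀ i, 0 < p i) (hz : ∀ i x, 0 ≤ z i x)
    (hz1 : ∀ i, ∑ x, z i x = 1) (i : ι) :
    0 < ∑ x, √(z i x) * mixture p z x / sqrtMixture p z x :=
  pos_of_mul_pos_right ((pow_pos (bhattacharyya_mixture_pos hp hz hz1 i) 2).trans_le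
    (bhattacharyya_mixture_sq_le hp hz i))
    (sum_nonneg fun r _ => mul_nonneg (hp r).le (bhattacharyya_nonneg _ _))

theorem sum_mul_log_mixture_div_le (hp : ∀ i, 0 < p i) (hz : ∀ i x, 0 ≤ z i x)
    (hz1 : ∀ i, ∑ x, z i x = 1) (i : ι) :
    ∑ x, z i x * log (mixture p z x / z i x) ≤ log (∑ r, p r * bhattacharyya (z i) (z r)) +
      log (∑ x, √(z i x) * mixture p z x / sqrtMixture p z x) := by
  have hc : 0 < ∑ r, p r * bhattacharyya (z i) (z r) :=
    calc 0 < p i * bhattacharyya (z i) (z i) := by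
          rw [bhattacharyya_self (hz i), hz1, mul_one]
          exact hp i
      _ ≤ _ := single_le_sum (f := fun r => p r * bhattacharyya (z i) (z r))
          (fun r _ => mul_nonneg (hp r).le (bhattacharyya_nonneg _ _)) (mem_univ i)
  calc ∑ x, z i x * log (mixture p z x / z i x)
      ≤ 2 * log (bhattacharyya (z i) (mixture p z)) :=
        sum_mul_log_div_le_two_mul_log_bhattacharyya (hz i) (hz1 i)
          (mixture_nonneg (fun j => (hp j).le) hz) fun x hx => mixture_pos hp hz hx
    _ = log (bhattacharyya (z i) (mixture p z) ^ 2) := by rw [log_pow]; norm_num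
    _ ≤ _ := log_le_log (pow_pos (bhattacharyya_mixture_pos hp hz hz1 i) 2)
        (bhattacharyya_mixture_sq_le hp hz i)
    _ = _ := log_mul hc.ne' (sum_sqrt_mul_mixture_div_sqrtMixture_pos hp hz hz1 i).ne'

theorem sum_mul_sum_mul_log_mixture_div_le (hp : ∀ i, 0 < p i) (hz : ∀ i x, 0 ≤ z i x)
    (hp1 : ∑ i, p i = 1) (hz1 : ∀ i, ∑ x, z i x = 1) :
    ∑ i, p i * ∑ x, z i x * log (mixture p z x / z i x) ≤
      ∑ i, p i * log (∑ r, p r * bhattacharyya (z i) (z r)) := by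
  set d : ι → ℝ := fun i => ∑ x, √(z i x) * mixture p z x / sqrtMixture p z x
  have hd : ∀ i, 0 < d i := sum_sqrt_mul_mixture_div_sqrtMixture_pos hp hz hz1
  have hlogd : ∑ i, p i * log (d i) ≤ 0 := by
    have hjensen := sum_mul_log_div_le_log_sum (u := fun i => p i * d i) (fun i => (hp i).le) hp1
      (fun i => (mul_pos (hp i) (hd i)).le) fun i _ => mul_pos (hp i) (hd i)
    rwa [sum_mul_sum_sqrt_mul_mixture_div_sqrtMixture hp hz hp1 hz1, log_one,
      sum_congr rfl fun i _ => by rw [mul_div_cancel_left₀ _ (hp i).ne']] at hjensen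
  calc ∑ i, p i * ∑ x, z i x * log (mixture p z x / z i x)
      ≤ ∑ i, p i * (log (∑ r, p r * bhattacharyya (z i) (z r)) + log (d i)) :=
        sum_le_sum fun i _ => mul_le_mul_of_nonneg_left (sum_mul_log_mixture_div_le hp hz hz1 i)
          (hp i).le
    _ = ∑ i, p i * log (∑ r, p r * bhattacharyya (z i) (z r)) + ∑ i, p i * log (d i) := by
        simp only [mul_add, sum_add_distrib]
    _ ≤ _ := by linarith

end Mixture

end

theorem mixture_entropy_lower_bound_general
    {X : Type*} [Fintype X]
    (C : ℕ)
    (p : Fin C → ℝ) (hp_pos : ∀ s, 0 < p s) (hp_sum : ∑ s, p s = 1)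
    (z : Fin C → X → ℝ) (hz_nonneg : ∀ s x, 0 ≤ z s x) (hz_sum : ∀ s, ∑ x, z s x = 1)
    -- the mixture distribution
    (m : X → ℝ) (hm : ∀ x, m x = ∑ s, p s * z s x)
    -- Shannon entropy of a probability mass function on `X`
    (H : (X → ℝ) → ℝ) (hH : ∀ a : X → ℝ, H a = -∑ x, a x * Real.log (a x)) :
    H m ≥ ∑ s, p s * H (z s)
      - ∑ s, p s * Real.log (∑ r, p r * ∑ x, Real.sqrt (z s x * z r x)) := by
  have hH' : ∀ a, H a = ∑ x, negMulLog (a x) := fun a => by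
    simp only [hH, negMulLog, neg_mul, sum_neg_distrib]
  have hm' : m = mixture p z := funext hm
  have hKL := sum_mul_sum_mul_log_mixture_div_le hp_pos hz_nonneg hp_sum hz_sum
  simp only [hH', hm', sum_negMulLog_mixture hp_pos hz_nonneg]
  unfold bhattacharyya at hKL
  linarith

/-- **Lemma 1 (Kolchinsky–Tracey).** Entropy lower bound for a finite mixture of discrete
distributions in terms of pairwise Bhattacharyya coefficients. -/
theorem mixture_entropy_lower_bound
    {X : Type*} [Fintype X] [Nonempty X]
    (C : ℕ) (hC : 1 ≤ C)
    (p : Fin C → ℝ) (hp_pos : ∀ s, 0 < p s) (hp_sum : ∑ s, p s = 1)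
    (z : Fin C → X → ℝ) (hz_nonneg : ∀ s x, 0 ≤ z s x) (hz_sum : ∀ s, ∑ x, z s x = 1)
    -- the mixture distribution
    (m : X → ℝ) (hm : ∀ x, m x = ∑ s, p s * z s x)
    -- Shannon entropy of a probability mass function on `X`
    (H : (X → ℝ) → ℝ) (hH : ∀ a : X → ℝ, H a = -∑ x, a x * Real.log (a x)) :
    H m ≥ ∑ s, p s * H (z s)
      - ∑ s, p s * Real.log (∑ r, p r * ∑ x, Real.sqrt (z s x * z r x)) :=
  mixture_entropy_lower_bound_general C p hp_pos hp_sum z hz_nonneg hz_sum m hm H hH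
end

section
/- Let C ≥ 1 and D be natural numbers, let q_s, q_r : {0,…,D} → ℝ be probability vectors, and let a, b : Fin C → ℝ be probability vectors. Define on Ω = {n : Fin C → ℕ | Σ_k n_k ≤ D} the probability mass functions P_s(n) = q_s(|n|) · (|n|! / Π_k n_k!) · Π_k a_k^{n_k} and P_r(n) = q_r(|n|) · (|n|! / Π_k n_k!) · Π_k b_k^{n_k}, where |n| = Σ_k n_k. Then the Bhattacharyya coefficient satisfies BC(P_s, P_r) = Σ_{d=0}^{D} √(q_s(d) q_r(d)) · ( Σ_{k=1}^{C} √(a_k b_k) )^d. -/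
/-!
Because the multinomial coefficient enters `Ps n * Pr n` squared, the square root of the product
on a configuration `n` of size `d` is `√(qs d * qr d)` times the `n`-th term of the multinomial
expansion of `(∑ k, √(a k * b k)) ^ d`. Grouping the configurations in `Ω` by their size and
summing each group with the multinomial theorem gives the formula.
-/

open Finset

theorem Real.sqrt_pow {x : ℝ} (hx : 0 ≤ x) (m : ℕ) : √(x ^ m) = √x ^ m := by
  rw [← Real.sqrt_sq (pow_nonneg (Real.sqrt_nonneg x) m), pow_right_comm, Real.sq_sqrt hx]

theorem Real.sqrt_mul_multinomial_terms {ι : Type*} (s : Finset ι) (x y M : ℝ) (hM : 0 ≤ M)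
    {a b : ι → ℝ} (ha : ∀ i ∈ s, 0 ≤ a i) (hb : ∀ i ∈ s, 0 ≤ b i) (n : ι → ℕ) :
    √((x * M * ∏ i ∈ s, a i ^ n i) * (y * M * ∏ i ∈ s, b i ^ n i))
      = √(x * y) * (M * ∏ i ∈ s, √(a i * b i) ^ n i) := by
  have hab : ∀ i ∈ s, 0 ≤ a i * b i := fun i hi => mul_nonneg (ha i hi) (hb i hi)
  calc √((x * M * ∏ i ∈ s, a i ^ n i) * (y * M * ∏ i ∈ s, b i ^ n i))
      = √((x * y) * (M * M * ∏ i ∈ s, (a i * b i) ^ n i)) := by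
        simp only [mul_pow, prod_mul_distrib]
        ring_nf
    _ = √(x * y) * (M * ∏ i ∈ s, √(a i * b i) ^ n i) := by
        rw [Real.sqrt_mul' _ (mul_nonneg (mul_self_nonneg M)
            (prod_nonneg fun i hi => pow_nonneg (hab i hi) _)),
          Real.sqrt_mul (mul_self_nonneg M), Real.sqrt_mul_self hM,
          Real.sqrt_prod _ fun i hi => pow_nonneg (hab i hi) _]
        congr 2
        exact prod_congr rfl fun i hi => Real.sqrt_pow (hab i hi) _

section BoundedConfigurations

variable {ι : Type*} [Fintype ι] [DecidableEq ι]

theorem filter_sum_eq_piAntidiag_of_le {D d : ℕ} (hd : d ≤ D) :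
    ((Fintype.piFinset fun _ : ι => range (D + 1)).filter (fun n => ∑ k, n k ≤ D)).filter
        (fun n => ∑ k, n k = d) = piAntidiag univ d := by
  ext n
  simp only [mem_filter, Fintype.mem_piFinset, mem_range, mem_piAntidiag, mem_univ,
    implies_true, and_true]
  refine ⟨fun h => h.2, fun h => ⟨⟨fun k => ?_, h ▸ hd⟩, h⟩⟩
  have hk : n k ≤ d := h ▸ single_le_sum (fun j _ => Nat.zero_le (n j)) (mem_univ k)
  omega

theorem sum_filter_sum_le_eq_sum_piAntidiag {M : Type*} [AddCommMonoid M] (D : ℕ)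
    (f : (ι → ℕ) → M) :
    ∑ n ∈ (Fintype.piFinset fun _ : ι => range (D + 1)).filter (fun n => ∑ k, n k ≤ D), f n
      = ∑ d ∈ range (D + 1), ∑ n ∈ piAntidiag univ d, f n := by
  rw [← sum_fiberwise_of_maps_to (t := range (D + 1)) (g := fun n => ∑ k, n k)
    (fun n hn => mem_range_succ_iff.2 (mem_filter.1 hn).2) f]
  exact sum_congr rfl fun d hd => by
    rw [filter_sum_eq_piAntidiag_of_le (mem_range_succ_iff.1 hd)]

end BoundedConfigurations

theorem degree_weighted_multinomial_bhattacharyya_general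
    (C D : ℕ)
    (qs qr : ℕ → ℝ)
    (a b : Fin C → ℝ)
    (ha_nonneg : ∀ k, 0 ≤ a k)
    (hb_nonneg : ∀ k, 0 ≤ b k)
    -- the space of neighborhood label configurations of size at most `D`
    (Ω : Finset (Fin C → ℕ))
    (hΩ : Ω = (Fintype.piFinset fun _ : Fin C => Finset.range (D + 1)).filter
        (fun n => ∑ k, n k ≤ D))
    -- the two degree-weighted multinomial probability mass functions on `Ω`
    (Ps Pr : (Fin C → ℕ) → ℝ)
    (hPs : ∀ n, Ps n =
      qs (∑ k, n k) * (Nat.multinomial Finset.univ n : ℝ) * ∏ k, a k ^ n k)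
    (hPr : ∀ n, Pr n =
      qr (∑ k, n k) * (Nat.multinomial Finset.univ n : ℝ) * ∏ k, b k ^ n k) :
    ∑ n ∈ Ω, Real.sqrt (Ps n * Pr n)
      = ∑ d ∈ Finset.range (D + 1), Real.sqrt (qs d * qr d) *
          (∑ k, Real.sqrt (a k * b k)) ^ d := by
  rw [hΩ, sum_filter_sum_le_eq_sum_piAntidiag]
  refine sum_congr rfl fun d _ => ?_
  rw [sum_pow_eq_sum_piAntidiag, mul_sum]
  refine sum_congr rfl fun n hn => ?_
  rw [hPs, hPr, Real.sqrt_mul_multinomial_terms _ _ _ _ (Nat.cast_nonneg _)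
    (fun k _ => ha_nonneg k) (fun k _ => hb_nonneg k), (mem_piAntidiag.1 hn).1]

/-- The Bhattacharyya coefficient between two degree-weighted multinomial distributions over
neighborhood label configurations (Equation (bat) of Appendix B). -/
theorem degree_weighted_multinomial_bhattacharyya
    (C D : ℕ) (hC : 1 ≤ C)
    (qs qr : ℕ → ℝ)
    (hqs_nonneg : ∀ d, 0 ≤ qs d) (hqs_sum : ∑ d ∈ Finset.range (D + 1), qs d = 1)
    (hqr_nonneg : ∀ d, 0 ≤ qr d) (hqr_sum : ∑ d ∈ Finset.range (D + 1), qr d = 1)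
    (a b : Fin C → ℝ)
    (ha_nonneg : ∀ k, 0 ≤ a k) (ha_sum : ∑ k, a k = 1)
    (hb_nonneg : ∀ k, 0 ≤ b k) (hb_sum : ∑ k, b k = 1)
    -- the space of neighborhood label configurations of size at most `D`
    (Ω : Finset (Fin C → ℕ))
    (hΩ : Ω = (Fintype.piFinset fun _ : Fin C => Finset.range (D + 1)).filter
        (fun n => ∑ k, n k ≤ D))
    -- the two degree-weighted multinomial probability mass functions on `Ω`
    (Ps Pr : (Fin C → ℕ) → ℝ)
    (hPs : ∀ n, Ps n =
      qs (∑ k, n k) * (Nat.multinomial Finset.univ n : ℝ) * ∏ k, a k ^ n k)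
    (hPr : ∀ n, Pr n =
      qr (∑ k, n k) * (Nat.multinomial Finset.univ n : ℝ) * ∏ k, b k ^ n k) :
    ∑ n ∈ Ω, Real.sqrt (Ps n * Pr n)
      = ∑ d ∈ Finset.range (D + 1), Real.sqrt (qs d * qr d) *
          (∑ k, Real.sqrt (a k * b k)) ^ d :=
  degree_weighted_multinomial_bhattacharyya_general C D qs qr a b ha_nonneg hb_nonneg Ω hΩ Ps Pr hPs
    hPr
end
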